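/- arXiv:2112.14456 — 5 statements merged into one kernel-verified Lean document; each statement's English description precedes it below -/
import Mathlib

section
/- Assume b = A x̄ for some x̄ ∈ ℝ^n. For any x ∈ ℝ^n, the point x̃ := x − Aᵀ S W Sᵀ (Ax − b) satisfies: (i) Sᵀ A x̃ = Sᵀ b; (ii) ‖x − x̃‖² = (Ax − b)ᵀ H (Ax − b) = g(x); and (iii) x̃ is the Euclidean orthogonal projection of x onto the sketched hyperplane, i.e. ‖x − x̃‖ ≤ ‖x − y‖ for every y with Sᵀ A y = Sᵀ b. -/
/-!
Write `B = Sᵀ A`, so that `M = B Bᵀ`, and put `z = x - x̄`; consistency gives `Sᵀ (A x - b) = B z`,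
hence `x - x̃ = Bᵀ W B z`. The one identity needed about the generalized inverse is `M W B = B`:
`(M W - 1) M = 0` and `M = B Bᵀ` has the same column space as `B`. It makes `B Bᵀ W B z = B z`,
which is the sketched equation (i) and turns `‖Bᵀ W B z‖²` into `(B z)ᵀ W (B z)`, the loss (ii).
Finally `x - x̃` lies in the row space of `B`, which is orthogonal to the direction space
`ker B` of the sketched hyperplane, so Pythagoras gives (iii).
-/

open Matrix

namespace Matrix

theorem mul_transpose_mul_mul_eq_self {ι κ : Type*} [Fintype ι] [Fintype κ] [DecidableEq ι]
    {B : Matrix ι κ ℝ} {W : Matrix ι ι ℝ} (h : B * Bᵀ * W * (B * Bᵀ) = B * Bᵀ) :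
    B * Bᵀ * W * B = B := by
  have hker : (B * Bᵀ * W - 1) * (B * Bᴴ) = 0 := by
    rw [conjTranspose_eq_transpose_of_trivial, Matrix.sub_mul, h, Matrix.one_mul, sub_self]
  rw [mul_self_mul_conjTranspose_eq_zero, Matrix.sub_mul, Matrix.one_mul, sub_eq_zero] at hker
  exact hker

variable {ι κ R : Type*} [Fintype ι] [Fintype κ]
  [CommRing R] [LinearOrder R] [IsStrictOrderedRing R]

theorem dotProduct_self_le_add_of_dotProduct_eq_zero {u v : κ → R} (h : u ⬝ᵥ v = 0) :
    u ⬝ᵥ u ≤ (u + v) ⬝ᵥ (u + v) := by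
  have hv : 0 ≤ v ⬝ᵥ v := Fintype.sum_nonneg fun i => mul_self_nonneg (v i)
  rw [add_dotProduct, dotProduct_add, dotProduct_add, h, dotProduct_comm v u, h]
  linarith

theorem transpose_mulVec_dotProduct_self_le (B : Matrix ι κ R) (u : ι → R) {x y : κ → R}
    (hy : B *ᵥ y = B *ᵥ (x - Bᵀ *ᵥ u)) :
    (Bᵀ *ᵥ u) ⬝ᵥ (Bᵀ *ᵥ u) ≤ (x - y) ⬝ᵥ (x - y) := by
  have horth : (Bᵀ *ᵥ u) ⬝ᵥ (x - Bᵀ *ᵥ u - y) = 0 := by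
    rw [dotProduct_comm, dotProduct_transpose_mulVec, mulVec_sub, hy, sub_self, dotProduct_zero]
  have hsplit : Bᵀ *ᵥ u + (x - Bᵀ *ᵥ u - y) = x - y := by abel
  simpa only [hsplit] using dotProduct_self_le_add_of_dotProduct_eq_zero horth

end Matrix

theorem stmt2_general {m n τ : ℕ} (A : Matrix (Fin m) (Fin n) ℝ) (b : Fin m → ℝ)
    (xbar : Fin n → ℝ) (hxbar : A.mulVec xbar = b)
    (S : Matrix (Fin m) (Fin τ) ℝ) (W : Matrix (Fin τ) (Fin τ) ℝ)
    (hMWM : (Sᵀ * A * Aᵀ * S) * W * (Sᵀ * A * Aᵀ * S) = Sᵀ * A * Aᵀ * S)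
    (x : Fin n → ℝ) :
    (Sᵀ * A).mulVec (x - (Aᵀ * S * W * Sᵀ).mulVec (A.mulVec x - b)) = Sᵀ.mulVec b ∧
    (x - (x - (Aᵀ * S * W * Sᵀ).mulVec (A.mulVec x - b))) ⬝ᵥ
        (x - (x - (Aᵀ * S * W * Sᵀ).mulVec (A.mulVec x - b))) =
      (A.mulVec x - b) ⬝ᵥ (S * W * Sᵀ).mulVec (A.mulVec x - b) ∧
    ∀ y : Fin n → ℝ, (Sᵀ * A).mulVec y = Sᵀ.mulVec b →
      Real.sqrt ((x - (x - (Aᵀ * S * W * Sᵀ).mulVec (A.mulVec x - b))) ⬝ᵥ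
          (x - (x - (Aᵀ * S * W * Sᵀ).mulVec (A.mulVec x - b)))) ≤
        Real.sqrt ((x - y) ⬝ᵥ (x - y)) := by
  set B := Sᵀ * A
  have hBWB : B * Bᵀ * W * B = B := by
    refine mul_transpose_mul_mul_eq_self ?_
    simpa only [B, transpose_mul, transpose_transpose, Matrix.mul_assoc] using hMWM
  have hres : Sᵀ *ᵥ (A *ᵥ x - b) = B *ᵥ (x - xbar) := by
    rw [← hxbar, ← mulVec_sub, mulVec_mulVec]
  have hstep : (Aᵀ * S * W * Sᵀ) *ᵥ (A *ᵥ x - b) = Bᵀ *ᵥ (W *ᵥ (B *ᵥ (x - xbar))) := by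
    rw [← hres, mulVec_mulVec, mulVec_mulVec, transpose_mul, transpose_transpose]
  have hsketch : B *ᵥ (Bᵀ *ᵥ (W *ᵥ (B *ᵥ (x - xbar)))) = B *ᵥ (x - xbar) := by
    simp only [mulVec_mulVec, ← Matrix.mul_assoc, hBWB]
  have hsolves : B *ᵥ (x - Bᵀ *ᵥ (W *ᵥ (B *ᵥ (x - xbar)))) = Sᵀ *ᵥ b := by
    rw [mulVec_sub, hsketch, mulVec_sub, sub_sub_cancel, ← hxbar, mulVec_mulVec]
  rw [sub_sub_cancel, hstep]
  refine ⟨hsolves, ?_, fun y hy => Real.sqrt_le_sqrt ?_⟩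
  · rw [dotProduct_transpose_mulVec, hsketch, dotProduct_comm, ← hres, ← mulVec_mulVec,
      ← mulVec_mulVec, dotProduct_mulVec _ S, ← mulVec_transpose]
  · exact transpose_mulVec_dotProduct_self_le B _ (hy.trans hsolves.symm)

/-- for a consistent system, x̃ := x − Aᵀ S W Sᵀ (Ax − b) satisfies the
sketched equation, ‖x − x̃‖² equals the sketched loss g(x), and x̃ is the Euclidean
orthogonal projection of x onto the sketched hyperplane. -/
theorem stmt2 {m n τ : ℕ} (A : Matrix (Fin m) (Fin n) ℝ) (b : Fin m → ℝ)
    (xbar : Fin n → ℝ) (hxbar : A.mulVec xbar = b)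
    (S : Matrix (Fin m) (Fin τ) ℝ) (W : Matrix (Fin τ) (Fin τ) ℝ)
    (hWsym : Wᵀ = W)
    (hMWM : (Sᵀ * A * Aᵀ * S) * W * (Sᵀ * A * Aᵀ * S) = Sᵀ * A * Aᵀ * S)
    (hWMW : W * (Sᵀ * A * Aᵀ * S) * W = W)
    (hMW : ((Sᵀ * A * Aᵀ * S) * W)ᵀ = (Sᵀ * A * Aᵀ * S) * W)
    (hWM : (W * (Sᵀ * A * Aᵀ * S))ᵀ = W * (Sᵀ * A * Aᵀ * S))
    (x : Fin n → ℝ) :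
    (Sᵀ * A).mulVec (x - (Aᵀ * S * W * Sᵀ).mulVec (A.mulVec x - b)) = Sᵀ.mulVec b ∧
    (x - (x - (Aᵀ * S * W * Sᵀ).mulVec (A.mulVec x - b))) ⬝ᵥ
        (x - (x - (Aᵀ * S * W * Sᵀ).mulVec (A.mulVec x - b))) =
      (A.mulVec x - b) ⬝ᵥ (S * W * Sᵀ).mulVec (A.mulVec x - b) ∧
    ∀ y : Fin n → ℝ, (Sᵀ * A).mulVec y = Sᵀ.mulVec b →
      Real.sqrt ((x - (x - (Aᵀ * S * W * Sᵀ).mulVec (A.mulVec x - b))) ⬝ᵥ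
          (x - (x - (Aᵀ * S * W * Sᵀ).mulVec (A.mulVec x - b)))) ≤
        Real.sqrt ((x - y) ⬝ᵥ (x - y)) :=
  stmt2_general A b xbar hxbar S W hMWM x
end

section
/- Sufficient decrease of one sketched Bregman projection step: let f : ℝ^n → ℝ be μ-strongly convex, x ∈ ℝ^n, x_* ∈ ∂f(x), and let L := {y ∈ ℝ^n : Sᵀ A y = Sᵀ b}. Suppose x̂ ∈ L, x̂_* ∈ ∂f(x̂), and the admissibility inequality D_f^{x̂_*}(x̂, y) ≤ D_f^{x_*}(x, y) − D_f^{x_*}(x, x̂) holds for all y ∈ L. If A x̄ = b, then D_f^{x̂_*}(x̂, x̄) ≤ D_f^{x_*}(x, x̄) − (μ/2)·g(x), where g(x) = (Ax − b)ᵀ H (Ax − b) is the sketched loss. -/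
open Matrix

def IsSubgrad {n : ℕ} (f : (Fin n → ℝ) → ℝ) (x xs : Fin n → ℝ) : Prop :=
  ∀ u : Fin n → ℝ, f u ≥ f x + xs ⬝ᵥ (u - x)

def StronglyConvexWith {n : ℕ} (μ : ℝ) (f : (Fin n → ℝ) → ℝ) : Prop :=
  ∀ x y xs : Fin n → ℝ, IsSubgrad f x xs →
    f y ≥ f x + xs ⬝ᵥ (y - x) + μ / 2 * ((y - x) ⬝ᵥ (y - x))

noncomputable def breg {n : ℕ} (f : (Fin n → ℝ) → ℝ) (xs x y : Fin n → ℝ) : ℝ :=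
  f y - f x - xs ⬝ᵥ (y - x)

/-! Because `x̂ ∈ L`, `Sᵀ (A x - b) = -(Sᵀ A) (x̂ - x)`, so `g(x) = ‖P (x̂ - x)‖²` for
`P = (Sᵀ A)ᵀ W (Sᵀ A)`, which is an orthogonal projection since `W` is a symmetric generalized
inverse of `M = (Sᵀ A)(Sᵀ A)ᵀ`. Hence `g(x) ≤ ‖x̂ - x‖² ≤ (2/μ) D_f^{x_*}(x, x̂)` by strong
convexity, and admissibility at `y = x̄ ∈ L` concludes. -/

theorem StronglyConvexWith.mul_dotProduct_le_breg {n : ℕ} {μ : ℝ} {f : (Fin n → ℝ) → ℝ}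
    (hf : StronglyConvexWith μ f) {x xs : Fin n → ℝ} (hxs : IsSubgrad f x xs) (y : Fin n → ℝ) :
    μ / 2 * ((y - x) ⬝ᵥ (y - x)) ≤ breg f xs x y := by
  have := hf x y xs hxs
  unfold breg
  linarith

namespace Matrix

variable {m n k : Type*} [Fintype m] [Fintype n] [Fintype k]

omit [Fintype n] in
theorem IsSymm.transpose_mul_mul_same {R : Type*} [CommSemiring R] {W : Matrix k k R}
    (hW : W.IsSymm) (B : Matrix k n R) : (Bᵀ * W * B).IsSymm := by
  rw [IsSymm, transpose_mul, transpose_mul, transpose_transpose, hW.eq, Matrix.mul_assoc]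

theorem isIdempotentElem_transpose_mul_mul {R : Type*} [Semiring R] {B : Matrix k n R}
    {W : Matrix k k R} (hW : W * (B * Bᵀ) * W = W) : IsIdempotentElem (Bᵀ * W * B) :=
  calc Bᵀ * W * B * (Bᵀ * W * B) = Bᵀ * (W * (B * Bᵀ) * W) * B := by
        simp only [Matrix.mul_assoc]
    _ = Bᵀ * W * B := by rw [hW]

theorem dotProduct_mulVec_le_of_isSymm_of_isIdempotentElem {P : Matrix n n ℝ} (hP : P.IsSymm)
    (hPP : IsIdempotentElem P) (q : n → ℝ) : q ⬝ᵥ P *ᵥ q ≤ q ⬝ᵥ q := by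
  classical
  -- `1 - P` is again a symmetric idempotent, hence of the form `Qᵀ Q`.
  have hQ : (1 - P)ᴴ * (1 - P) = 1 - P := by
    rw [conjTranspose_eq_transpose_of_trivial, transpose_sub, transpose_one, hP.eq,
      (hPP.one_sub).eq]
  have := (posSemidef_conjTranspose_mul_self (1 - P)).dotProduct_mulVec_nonneg q
  rw [hQ, star_trivial, sub_mulVec, one_mulVec, dotProduct_sub] at this
  linarith

theorem dotProduct_mulVec_mul_mul_transpose {R : Type*} [CommSemiring R] (S : Matrix m k R)
    (W : Matrix k k R) (r : m → R) :
    r ⬝ᵥ (S * W * Sᵀ) *ᵥ r = (Sᵀ *ᵥ r) ⬝ᵥ W *ᵥ (Sᵀ *ᵥ r) := by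
  rw [← mulVec_mulVec, ← mulVec_mulVec, dotProduct_mulVec, ← mulVec_transpose]

end Matrix

noncomputable def sketchedLoss {m n t : Type*} [Fintype m] [Fintype n] [Fintype t]
    (A : Matrix m n ℝ) (b : m → ℝ) (S : Matrix m t ℝ) (W : Matrix t t ℝ) (x : n → ℝ) : ℝ :=
  (A *ᵥ x - b) ⬝ᵥ (S * W * Sᵀ) *ᵥ (A *ᵥ x - b)

theorem sketchedLoss_le_of_mem {m n t : Type*} [Fintype m] [Fintype n] [Fintype t]
    {A : Matrix m n ℝ} {b : m → ℝ} {S : Matrix m t ℝ} {W : Matrix t t ℝ} (hW : W.IsSymm)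
    (hWMW : W * ((Sᵀ * A) * (Sᵀ * A)ᵀ) * W = W) (x : n → ℝ) {y : n → ℝ}
    (hy : (Sᵀ * A) *ᵥ y = Sᵀ *ᵥ b) :
    sketchedLoss A b S W x ≤ (y - x) ⬝ᵥ (y - x) := by
  have hres : Sᵀ *ᵥ (A *ᵥ x - b) = -((Sᵀ * A) *ᵥ (y - x)) := by
    rw [mulVec_sub, mulVec_sub, mulVec_mulVec, hy, neg_sub]
  calc sketchedLoss A b S W x
      = ((Sᵀ * A) *ᵥ (y - x)) ⬝ᵥ W *ᵥ ((Sᵀ * A) *ᵥ (y - x)) := by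
        rw [sketchedLoss, dotProduct_mulVec_mul_mul_transpose, hres, mulVec_neg, neg_dotProduct,
          dotProduct_neg, neg_neg]
    _ = (y - x) ⬝ᵥ ((Sᵀ * A)ᵀ * W * (Sᵀ * A)) *ᵥ (y - x) := by
        simpa only [transpose_transpose] using
          (dotProduct_mulVec_mul_mul_transpose (Sᵀ * A)ᵀ W (y - x)).symm
    _ ≤ (y - x) ⬝ᵥ (y - x) :=
        dotProduct_mulVec_le_of_isSymm_of_isIdempotentElem (hW.transpose_mul_mul_same _)
          (isIdempotentElem_transpose_mul_mul hWMW) _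

theorem stmt4_general {m n τ : ℕ} (A : Matrix (Fin m) (Fin n) ℝ) (b : Fin m → ℝ)
    (xbar : Fin n → ℝ) (hxbar : A.mulVec xbar = b)
    (S : Matrix (Fin m) (Fin τ) ℝ) (W : Matrix (Fin τ) (Fin τ) ℝ)
    (hWsym : Wᵀ = W)
    (hWMW : W * (Sᵀ * A * Aᵀ * S) * W = W)
    (f : (Fin n → ℝ) → ℝ) (μ : ℝ) (hμ : 0 < μ) (hf : StronglyConvexWith μ f)
    (x xs : Fin n → ℝ) (hxs : IsSubgrad f x xs)
    (xhat xhs : Fin n → ℝ)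
    (hxhatL : (Sᵀ * A).mulVec xhat = Sᵀ.mulVec b)
    (hadm : ∀ y : Fin n → ℝ, (Sᵀ * A).mulVec y = Sᵀ.mulVec b →
      breg f xhs xhat y ≤ breg f xs x y - breg f xs x xhat) :
    breg f xhs xhat xbar ≤ breg f xs x xbar -
      μ / 2 * ((A.mulVec x - b) ⬝ᵥ (S * W * Sᵀ).mulVec (A.mulVec x - b)) := by
  have hM : Sᵀ * A * Aᵀ * S = (Sᵀ * A) * (Sᵀ * A)ᵀ := by
    simp only [transpose_mul, transpose_transpose, Matrix.mul_assoc]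
  have hxbarL : (Sᵀ * A) *ᵥ xbar = Sᵀ *ᵥ b := by rw [← mulVec_mulVec, hxbar]
  have hloss : μ / 2 * sketchedLoss A b S W x ≤ μ / 2 * ((xhat - x) ⬝ᵥ (xhat - x)) :=
    mul_le_mul_of_nonneg_left (sketchedLoss_le_of_mem hWsym (hM ▸ hWMW) x hxhatL) (by positivity)
  have hconvex := hf.mul_dotProduct_le_breg hxs xhat
  have hadm_xbar := hadm xbar hxbarL
  change _ ≤ _ - μ / 2 * sketchedLoss A b S W x
  linarith

/-- sufficient decrease of one sketched Bregman projection step: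
D_f^{x̂_*}(x̂, x̄) ≤ D_f^{x_*}(x, x̄) − (μ/2)·g(x). -/
theorem stmt4 {m n τ : ℕ} (A : Matrix (Fin m) (Fin n) ℝ) (b : Fin m → ℝ)
    (xbar : Fin n → ℝ) (hxbar : A.mulVec xbar = b)
    (S : Matrix (Fin m) (Fin τ) ℝ) (W : Matrix (Fin τ) (Fin τ) ℝ)
    (hWsym : Wᵀ = W)
    (hMWM : (Sᵀ * A * Aᵀ * S) * W * (Sᵀ * A * Aᵀ * S) = Sᵀ * A * Aᵀ * S)
    (hWMW : W * (Sᵀ * A * Aᵀ * S) * W = W)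
    (hMW : ((Sᵀ * A * Aᵀ * S) * W)ᵀ = (Sᵀ * A * Aᵀ * S) * W)
    (hWM : (W * (Sᵀ * A * Aᵀ * S))ᵀ = W * (Sᵀ * A * Aᵀ * S))
    (f : (Fin n → ℝ) → ℝ) (μ : ℝ) (hμ : 0 < μ) (hf : StronglyConvexWith μ f)
    (x xs : Fin n → ℝ) (hxs : IsSubgrad f x xs)
    (xhat xhs : Fin n → ℝ)
    (hxhatL : (Sᵀ * A).mulVec xhat = Sᵀ.mulVec b)
    (hxhs : IsSubgrad f xhat xhs)
    (hadm : ∀ y : Fin n → ℝ, (Sᵀ * A).mulVec y = Sᵀ.mulVec b →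
      breg f xhs xhat y ≤ breg f xs x y - breg f xs x xhat) :
    breg f xhs xhat xbar ≤ breg f xs x xbar -
      μ / 2 * ((A.mulVec x - b) ⬝ᵥ (S * W * Sᵀ).mulVec (A.mulVec x - b)) :=
  stmt4_general A b xbar hxbar S W hWsym hWMW f μ hμ hf x xs hxs xhat xhs hxhatL hadm
end

section
/- Expected sketched loss dominates the residual: let p ∈ Δ_q^† and suppose there is σ > 0 such that Σ_{i=1}^q p_i·vᵀ Z_i v ≥ σ‖v‖² for every v ∉ Null(A). If A x̄ = b, then for every x ∈ ℝ^n, Σ_{i=1}^q p_i g_i(x) ≥ (σ/‖A‖²)·‖Ax − b‖², where ‖A‖ is the spectral norm of A (assume A ≠ 0). -/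
/-!
Put `v = x - x̄`, so that `Ax - b = Av`. The quadratic form `vᵀ (Aᵀ H_i A) v` equals the
sketched loss `(Av)ᵀ H_i (Av)`, hence the spectral hypothesis gives
`Σ p_i g_i(x) ≥ σ ‖v‖²`, and `‖Av‖ ≤ ‖A‖ ‖v‖` turns this into the bound by `σ / ‖A‖² · ‖Av‖²`.
-/

open Matrix

/-- The spectral norm (ℓ²→ℓ² operator norm) of a real matrix. -/
noncomputable def specNorm {m n : ℕ} (A : Matrix (Fin m) (Fin n) ℝ) : ℝ :=
  ‖LinearMap.toContinuousLinearMap (Matrix.toEuclideanLin A)‖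

theorem dotProduct_mulVec_conj {ι κ R : Type*} [Fintype ι] [Fintype κ] [CommSemiring R]
    (A : Matrix ι κ R) (H : Matrix ι ι R) (v : κ → R) :
    v ⬝ᵥ (Aᵀ * H * A) *ᵥ v = A *ᵥ v ⬝ᵥ H *ᵥ (A *ᵥ v) := by
  rw [← mulVec_mulVec, ← mulVec_mulVec, dotProduct_mulVec, vecMul_transpose]

theorem dotProduct_self_eq_norm_toLp_sq {k : ℕ} (w : Fin k → ℝ) :
    w ⬝ᵥ w = ‖WithLp.toLp 2 w‖ ^ 2 := by
  rw [← real_inner_self_eq_norm_sq, EuclideanSpace.inner_toLp_toLp, star_trivial]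

theorem mulVec_dotProduct_self_le {m n : ℕ} (A : Matrix (Fin m) (Fin n) ℝ) (v : Fin n → ℝ) :
    A *ᵥ v ⬝ᵥ A *ᵥ v ≤ specNorm A ^ 2 * (v ⬝ᵥ v) := by
  have hAv : ‖WithLp.toLp 2 (A *ᵥ v)‖ ≤ specNorm A * ‖WithLp.toLp 2 v‖ :=
    (LinearMap.toContinuousLinearMap (Matrix.toEuclideanLin A)).le_opNorm (WithLp.toLp 2 v)
  rw [dotProduct_self_eq_norm_toLp_sq, dotProduct_self_eq_norm_toLp_sq, ← mul_pow]
  exact pow_le_pow_left₀ (norm_nonneg _) hAv 2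

-- For `A = 0` both sides vanish, `c / 0` being `0`.
theorem div_specNorm_sq_mul_le {m n : ℕ} (A : Matrix (Fin m) (Fin n) ℝ) (v : Fin n → ℝ)
    {c : ℝ} (hc : 0 ≤ c) :
    c / specNorm A ^ 2 * (A *ᵥ v ⬝ᵥ A *ᵥ v) ≤ c * (v ⬝ᵥ v) := by
  rcases eq_or_ne (specNorm A) 0 with hA | hA
  · rw [hA, zero_pow two_ne_zero, div_zero, zero_mul]
    exact mul_nonneg hc (dotProduct_self_star_nonneg v)
  · calc c / specNorm A ^ 2 * (A *ᵥ v ⬝ᵥ A *ᵥ v)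
        ≤ c / specNorm A ^ 2 * (specNorm A ^ 2 * (v ⬝ᵥ v)) :=
          mul_le_mul_of_nonneg_left (mulVec_dotProduct_self_le A v) (by positivity)
      _ = c * (v ⬝ᵥ v) := by field_simp

theorem stmt5_general {m n τ q : ℕ} (A : Matrix (Fin m) (Fin n) ℝ)
    (b : Fin m → ℝ) (xbar : Fin n → ℝ) (hxbar : A.mulVec xbar = b)
    (S : Fin q → Matrix (Fin m) (Fin τ) ℝ) (W : Fin q → Matrix (Fin τ) (Fin τ) ℝ)
    (p : Fin q → ℝ)
    (σ : ℝ) (hσ : 0 < σ)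
    (hspec : ∀ v : Fin n → ℝ, A.mulVec v ≠ 0 →
      σ * (v ⬝ᵥ v) ≤ ∑ i, p i * (v ⬝ᵥ (Aᵀ * (S i * W i * (S i)ᵀ) * A).mulVec v))
    (x : Fin n → ℝ) :
    ∑ i, p i * ((A.mulVec x - b) ⬝ᵥ (S i * W i * (S i)ᵀ).mulVec (A.mulVec x - b)) ≥
      σ / (specNorm A) ^ 2 * ((A.mulVec x - b) ⬝ᵥ (A.mulVec x - b)) := by
  have hresidual : A *ᵥ x - b = A *ᵥ (x - xbar) := by rw [mulVec_sub, hxbar]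
  rw [hresidual]
  rcases eq_or_ne (A *ᵥ (x - xbar)) 0 with h0 | h0
  · simp [h0]
  · calc σ / specNorm A ^ 2 * (A *ᵥ (x - xbar) ⬝ᵥ A *ᵥ (x - xbar))
        ≤ σ * ((x - xbar) ⬝ᵥ (x - xbar)) := div_specNorm_sq_mul_le A _ hσ.le
      _ ≤ _ := by simpa only [dotProduct_mulVec_conj] using hspec _ h0

/-- expected sketched loss dominates the residual:
Σ p_i g_i(x) ≥ (σ/‖A‖²)·‖Ax − b‖². -/
theorem stmt5 {m n τ q : ℕ} (A : Matrix (Fin m) (Fin n) ℝ) (hA : A ≠ 0)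
    (b : Fin m → ℝ) (xbar : Fin n → ℝ) (hxbar : A.mulVec xbar = b)
    (S : Fin q → Matrix (Fin m) (Fin τ) ℝ) (W : Fin q → Matrix (Fin τ) (Fin τ) ℝ)
    (hWsym : ∀ i, (W i)ᵀ = W i)
    (hMWM : ∀ i, ((S i)ᵀ * A * Aᵀ * S i) * W i * ((S i)ᵀ * A * Aᵀ * S i)
      = (S i)ᵀ * A * Aᵀ * S i)
    (hWMW : ∀ i, W i * ((S i)ᵀ * A * Aᵀ * S i) * W i = W i)
    (hMW : ∀ i, (((S i)ᵀ * A * Aᵀ * S i) * W i)ᵀ = ((S i)ᵀ * A * Aᵀ * S i) * W i)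
    (hWM : ∀ i, (W i * ((S i)ᵀ * A * Aᵀ * S i))ᵀ = W i * ((S i)ᵀ * A * Aᵀ * S i))
    (p : Fin q → ℝ) (hp : ∀ i, 0 < p i) (hp1 : ∑ i, p i = 1)
    (σ : ℝ) (hσ : 0 < σ)
    (hspec : ∀ v : Fin n → ℝ, A.mulVec v ≠ 0 →
      σ * (v ⬝ᵥ v) ≤ ∑ i, p i * (v ⬝ᵥ (Aᵀ * (S i * W i * (S i)ᵀ) * A).mulVec v))
    (x : Fin n → ℝ) :
    ∑ i, p i * ((A.mulVec x - b) ⬝ᵥ (S i * W i * (S i)ᵀ).mulVec (A.mulVec x - b)) ≥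
      σ / (specNorm A) ^ 2 * ((A.mulVec x - b) ⬝ᵥ (A.mulVec x - b)) :=
  stmt5_general A b xbar hxbar S W p σ hσ hspec x
end

section
/- Exactness characterizes solutions via the expected sketched loss: let p ∈ Δ_q^†, set M := Σ_{i=1}^q p_i Z_i, and assume the exactness condition Null(A) = Null(M). If A x̄ = b, then for every x ∈ ℝ^n, Σ_{i=1}^q p_i g_i(x) = 0 if and only if Ax = b. -/
open Matrix

/-!
Put `H_i := S_i W_i S_iᵀ`. The pseudoinverse identity `W_i M_i W_i = W_i` gives
`H_i (A Aᵀ) H_i = H_i`, so `g_i(x) = ‖Aᵀ H_i r‖²` with `r = Ax - b`: every `g_i` is a square.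
With positive weights the expected loss vanishes iff `Aᵀ H_i r = 0` for all `i`. Since
`r = A (x - x̄)`, this means `Z_i (x - x̄) = 0` for all `i`, hence `M (x - x̄) = 0`, and exactness
turns this into `A (x - x̄) = 0`.
-/

theorem Matrix.IsSymm.mul_mul_transpose_same {R m k : Type*} [CommSemiring R] [Fintype k]
    {W : Matrix k k R} (hW : W.IsSymm) (S : Matrix m k R) : (S * W * Sᵀ).IsSymm := by
  rw [IsSymm, transpose_mul, transpose_mul, transpose_transpose, hW.eq, Matrix.mul_assoc]

section Sandwich

variable {R m n k : Type*} [CommRing R] [Fintype m] [Fintype n]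

theorem mul_mul_transpose_sandwich_eq_self [Fintype k] (A : Matrix m n R) (S : Matrix m k R)
    {W : Matrix k k R} (hWMW : W * (Sᵀ * A * Aᵀ * S) * W = W) :
    (S * W * Sᵀ) * (A * Aᵀ) * (S * W * Sᵀ) = S * W * Sᵀ :=
  calc (S * W * Sᵀ) * (A * Aᵀ) * (S * W * Sᵀ) = S * (W * (Sᵀ * A * Aᵀ * S) * W) * Sᵀ := by
        simp only [Matrix.mul_assoc]
    _ = S * W * Sᵀ := by rw [hWMW]

theorem dotProduct_mulVec_eq_dotProduct_self (A : Matrix m n R) {H : Matrix m m R}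
    (hH : H.IsSymm) (hHAH : H * (A * Aᵀ) * H = H) (r : m → R) :
    r ⬝ᵥ H *ᵥ r = (Aᵀ *ᵥ H *ᵥ r) ⬝ᵥ (Aᵀ *ᵥ H *ᵥ r) :=
  calc r ⬝ᵥ H *ᵥ r = r ⬝ᵥ (H * (A * Aᵀ) * H) *ᵥ r := by rw [hHAH]
    _ = (Hᵀ *ᵥ r) ⬝ᵥ (A *ᵥ Aᵀ *ᵥ H *ᵥ r) := by
        rw [← mulVec_mulVec, ← mulVec_mulVec, ← mulVec_mulVec, dotProduct_mulVec,
          ← mulVec_transpose]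
    _ = (Aᵀ *ᵥ H *ᵥ r) ⬝ᵥ (Aᵀ *ᵥ H *ᵥ r) := by
        rw [hH.eq, dotProduct_transpose_mulVec]

end Sandwich

theorem sum_mul_dotProduct_self_eq_zero_iff {ι n R : Type*} [Fintype ι] [Fintype n] [Ring R]
    [LinearOrder R] [IsStrictOrderedRing R] {p : ι → R} (hp : ∀ i, 0 < p i) (u : ι → n → R) :
    ∑ i, p i * (u i ⬝ᵥ u i) = 0 ↔ ∀ i, u i = 0 := by
  have hnonneg : ∀ i ∈ Finset.univ, 0 ≤ p i * (u i ⬝ᵥ u i) := fun i _ =>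
    mul_nonneg (hp i).le (Finset.sum_nonneg fun j _ => mul_self_nonneg (u i j))
  simp only [Finset.sum_eq_zero_iff_of_nonneg hnonneg, Finset.mem_univ, true_implies,
    mul_eq_zero, (hp _).ne', false_or, dotProduct_self_eq_zero]

theorem stmt15_general {m n τ q : ℕ} (A : Matrix (Fin m) (Fin n) ℝ)
    (b : Fin m → ℝ) (xbar : Fin n → ℝ) (hxbar : A.mulVec xbar = b)
    (S : Fin q → Matrix (Fin m) (Fin τ) ℝ) (W : Fin q → Matrix (Fin τ) (Fin τ) ℝ)
    (hWsym : ∀ i, (W i)ᵀ = W i)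
    (hWMW : ∀ i, W i * ((S i)ᵀ * A * Aᵀ * S i) * W i = W i)
    (p : Fin q → ℝ) (hp : ∀ i, 0 < p i)
    (hexact : ∀ v : Fin n → ℝ,
      A.mulVec v = 0 ↔ (∑ i, p i • (Aᵀ * (S i * W i * (S i)ᵀ) * A)).mulVec v = 0) :
    ∀ x : Fin n → ℝ,
      (∑ i, p i * ((A.mulVec x - b) ⬝ᵥ (S i * W i * (S i)ᵀ).mulVec (A.mulVec x - b)) = 0)
        ↔ A.mulVec x = b := by
  intro x
  have hsquare : ∀ i r, r ⬝ᵥ (S i * W i * (S i)ᵀ) *ᵥ r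
      = (Aᵀ *ᵥ (S i * W i * (S i)ᵀ) *ᵥ r) ⬝ᵥ (Aᵀ *ᵥ (S i * W i * (S i)ᵀ) *ᵥ r) := fun i =>
    dotProduct_mulVec_eq_dotProduct_self A (IsSymm.mul_mul_transpose_same (hWsym i) (S i))
      (mul_mul_transpose_sandwich_eq_self A (S i) (hWMW i))
  simp only [hsquare, sum_mul_dotProduct_self_eq_zero_iff hp]
  constructor
  · intro hzero
    rw [← sub_eq_zero, ← hxbar, ← mulVec_sub, hexact, sum_mulVec]
    refine Finset.sum_eq_zero fun i _ => ?_
    rw [smul_mulVec, ← mulVec_mulVec, ← mulVec_mulVec, mulVec_sub, hxbar, hzero i, smul_zero]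
  · intro hsol i
    rw [hsol, sub_self, mulVec_zero, mulVec_zero]

/-- exactness characterizes solutions via the expected sketched loss:
if Null(A) = Null(Σ p_i Z_i), then Σ p_i g_i(x) = 0 ↔ Ax = b. -/
theorem stmt15 {m n τ q : ℕ} (A : Matrix (Fin m) (Fin n) ℝ)
    (b : Fin m → ℝ) (xbar : Fin n → ℝ) (hxbar : A.mulVec xbar = b)
    (S : Fin q → Matrix (Fin m) (Fin τ) ℝ) (W : Fin q → Matrix (Fin τ) (Fin τ) ℝ)
    (hWsym : ∀ i, (W i)ᵀ = W i)
    (hMWM : ∀ i, ((S i)ᵀ * A * Aᵀ * S i) * W i * ((S i)ᵀ * A * Aᵀ * S i)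
      = (S i)ᵀ * A * Aᵀ * S i)
    (hWMW : ∀ i, W i * ((S i)ᵀ * A * Aᵀ * S i) * W i = W i)
    (hMW : ∀ i, (((S i)ᵀ * A * Aᵀ * S i) * W i)ᵀ = ((S i)ᵀ * A * Aᵀ * S i) * W i)
    (hWM : ∀ i, (W i * ((S i)ᵀ * A * Aᵀ * S i))ᵀ = W i * ((S i)ᵀ * A * Aᵀ * S i))
    (p : Fin q → ℝ) (hp : ∀ i, 0 < p i) (hp1 : ∑ i, p i = 1)
    (hexact : ∀ v : Fin n → ℝ,
      A.mulVec v = 0 ↔ (∑ i, p i • (Aᵀ * (S i * W i * (S i)ᵀ) * A)).mulVec v = 0) :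
    ∀ x : Fin n → ℝ,
      (∑ i, p i * ((A.mulVec x - b) ⬝ᵥ (S i * W i * (S i)ᵀ).mulVec (A.mulVec x - b)) = 0)
        ↔ A.mulVec x = b :=
  stmt15_general A b xbar hxbar S W hWsym hWMW p hp hexact
end

section
/- The dual update produces an admissible subgradient: let f : ℝ^n → ℝ be strongly convex, x ∈ ℝ^n, x_* ∈ ∂f(x), S ∈ ℝ^{m×τ}, and suppose y ∈ ℝ^τ and x⁺ ∈ ℝ^n satisfy x_* − Aᵀ S y ∈ ∂f(x⁺) and Sᵀ A x⁺ = Sᵀ b. Set x⁺_* := x_* − Aᵀ S y. Then for every z with Sᵀ A z = Sᵀ b, D_f^{x⁺_*}(x⁺, z) = D_f^{x_*}(x, z) − D_f^{x_*}(x, x⁺); in particular, x⁺ minimizes z ↦ D_f^{x_*}(x, z) over the sketched hyperplane {z : Sᵀ A z = Sᵀ b}, with admissible subgradient x⁺_*. -/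
/-!
By the three-point identity for Bregman distances, the claimed identity reduces to
⟨Aᵀ S y, z − x⁺⟩ = 0, which holds because Aᵀ S y = (Sᵀ A)ᵀ y is orthogonal to the kernel of
Sᵀ A, and z − x⁺ lies in that kernel. Minimality of x⁺ then follows since a Bregman distance
taken at a subgradient is nonnegative.
-/

open Matrix

section Bregman

variable {n : ℕ} (f : (Fin n → ℝ) → ℝ)

lemma breg_nonneg_of_isSubgrad {x xs : Fin n → ℝ} (h : IsSubgrad f x xs) (z : Fin n → ℝ) :
    0 ≤ breg f xs x z := by
  have := h z
  unfold breg
  linarith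

lemma breg_three_point (xs xs' x x' z : Fin n → ℝ) :
    breg f xs' x' z = breg f xs x z - breg f xs x x' + (xs - xs') ⬝ᵥ (z - x') := by
  have hsplit : xs ⬝ᵥ (z - x) = xs ⬝ᵥ (z - x') + xs ⬝ᵥ (x' - x) := by
    rw [← dotProduct_add, sub_add_sub_cancel]
  simp only [breg, sub_dotProduct]
  linarith

end Bregman

lemma transpose_mulVec_dotProduct_eq_zero {ι κ R : Type*} [Fintype ι] [Fintype κ] [CommRing R]
    (M : Matrix ι κ R) (y : ι → R) {v : κ → R} (hv : M *ᵥ v = 0) : Mᵀ *ᵥ y ⬝ᵥ v = 0 := by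
  rw [mulVec_transpose, ← dotProduct_mulVec, hv, dotProduct_zero]

theorem stmt17_general {m n τ : ℕ} (A : Matrix (Fin m) (Fin n) ℝ) (b : Fin m → ℝ)
    (S : Matrix (Fin m) (Fin τ) ℝ)
    (f : (Fin n → ℝ) → ℝ)
    (x xs : Fin n → ℝ)
    (y : Fin τ → ℝ) (xplus : Fin n → ℝ)
    (hsub : IsSubgrad f xplus (xs - (Aᵀ * S).mulVec y))
    (hfeas : (Sᵀ * A).mulVec xplus = Sᵀ.mulVec b) :
    (∀ z : Fin n → ℝ, (Sᵀ * A).mulVec z = Sᵀ.mulVec b →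
      breg f (xs - (Aᵀ * S).mulVec y) xplus z = breg f xs x z - breg f xs x xplus) ∧
    (∀ z : Fin n → ℝ, (Sᵀ * A).mulVec z = Sᵀ.mulVec b →
      breg f xs x xplus ≤ breg f xs x z) := by
  have hpythagoras : ∀ z : Fin n → ℝ, (Sᵀ * A).mulVec z = Sᵀ.mulVec b →
      breg f (xs - (Aᵀ * S).mulVec y) xplus z = breg f xs x z - breg f xs x xplus := by
    intro z hz
    have hperp : (Aᵀ * S).mulVec y ⬝ᵥ (z - xplus) = 0 := by
      rw [show Aᵀ * S = (Sᵀ * A)ᵀ by rw [transpose_mul, transpose_transpose]]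
      exact transpose_mulVec_dotProduct_eq_zero _ y (by rw [mulVec_sub, hz, hfeas, sub_self])
    rw [breg_three_point f xs, sub_sub_cancel, hperp, add_zero]
  exact ⟨hpythagoras, fun z hz =>
    by linarith [hpythagoras z hz, breg_nonneg_of_isSubgrad f hsub z]⟩

/-- the dual update produces an admissible subgradient: if
x⁺_* := x_* − Aᵀ S y ∈ ∂f(x⁺) and Sᵀ A x⁺ = Sᵀ b, then for every z on the sketched
hyperplane D_f^{x⁺_*}(x⁺, z) = D_f^{x_*}(x, z) − D_f^{x_*}(x, x⁺); in particular x⁺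
minimizes z ↦ D_f^{x_*}(x, z) over the sketched hyperplane. -/
theorem stmt17 {m n τ : ℕ} (A : Matrix (Fin m) (Fin n) ℝ) (b : Fin m → ℝ)
    (S : Matrix (Fin m) (Fin τ) ℝ)
    (f : (Fin n → ℝ) → ℝ) (hf : ∃ μ : ℝ, 0 < μ ∧ StronglyConvexWith μ f)
    (x xs : Fin n → ℝ) (hxs : IsSubgrad f x xs)
    (y : Fin τ → ℝ) (xplus : Fin n → ℝ)
    (hsub : IsSubgrad f xplus (xs - (Aᵀ * S).mulVec y))
    (hfeas : (Sᵀ * A).mulVec xplus = Sᵀ.mulVec b) :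
    (∀ z : Fin n → ℝ, (Sᵀ * A).mulVec z = Sᵀ.mulVec b →
      breg f (xs - (Aᵀ * S).mulVec y) xplus z = breg f xs x z - breg f xs x xplus) ∧
    (∀ z : Fin n → ℝ, (Sᵀ * A).mulVec z = Sᵀ.mulVec b →
      breg f xs x xplus ≤ breg f xs x z) :=
  stmt17_general A b S f x xs y xplus hsub hfeas
end
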